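/- Let M be a finite loopless rank-4 hypermodular matroid, and let F and L be flats of M with r(F) ≥ r(L). Then the pair {F, L} is non-modular if and only if F ∩ L = ∅ and either (r(F) = 3 and r(L) = 2) or (r(F) = r(L) = 2 and r(F∪L) = 3). -/

import Mathlib

open Set Matroid
open scoped Matroid

namespace SMC

variable {α : Type*}

/-- The rank of a set `X` in a matroid `M`: the maximum cardinality of an
independent subset of `X` (intended for finite matroids). -/
noncomputable def rk (M : Matroid α) (X : Set α) : ℕ :=
  sSup {n | ∃ I, M.Indep I ∧ I ⊆ X ∧ I.ncard = n}

/-- The rank of a matroid: the rank of its ground set. -/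
noncomputable def rkM (M : Matroid α) : ℕ := rk M M.E

/-- The modular defect of a pair of sets:
`r(X) + r(Y) - r(X ∪ Y) - r(X ∩ Y)` (a natural number). -/
noncomputable def pairDefect (M : Matroid α) (X Y : Set α) : ℕ :=
  rk M X + rk M Y - rk M (X ∪ Y) - rk M (X ∩ Y)

/-- A pair of sets is a modular pair if its modular defect is zero. -/
def ModularPair (M : Matroid α) (X Y : Set α) : Prop := pairDefect M X Y = 0

/-- A matroid is modular if every pair of flats is a modular pair. -/
def Modular (M : Matroid α) : Prop :=
  ∀ F L : Set α, M.IsFlat F → M.IsFlat L → ModularPair M F L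

/-- A matroid (of rank at least 3) is hypermodular if every pair of flats of
rank `r(M) - 1` is a modular pair. -/
def Hypermodular (M : Matroid α) : Prop :=
  ∀ F L : Set α, M.IsFlat F → M.IsFlat L →
    rk M F + 1 = rkM M → rk M L + 1 = rkM M → ModularPair M F L

/-- A modular cut of `M`: a collection of flats that is upward closed and
closed under intersections of modular pairs. -/
def ModularCut (M : Matroid α) (𝓜 : Set (Set α)) : Prop :=
  (∀ F ∈ 𝓜, M.IsFlat F) ∧
  (∀ L ∈ 𝓜, ∀ F : Set α, M.IsFlat F → L ⊆ F → F ∈ 𝓜) ∧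
  (∀ F ∈ 𝓜, ∀ L ∈ 𝓜, ModularPair M F L → F ∩ L ∈ 𝓜)

/-- A principal modular cut: the collection of all flats containing some fixed flat. -/
def PrincipalCut (M : Matroid α) (𝓜 : Set (Set α)) : Prop :=
  ∃ F : Set α, M.IsFlat F ∧ 𝓜 = {L | M.IsFlat L ∧ F ⊆ L}

/-- The modular cut generated by a collection `S` of flats:
the smallest modular cut containing `S`. -/
def genCut (M : Matroid α) (S : Set (Set α)) : Set (Set α) :=
  ⋂₀ {𝓜 | ModularCut M 𝓜 ∧ S ⊆ 𝓜}

/-- A Vámos line arrangement in a rank-4 matroid: four pairwise disjoint rank-2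
flats, the union of any three of which has rank 4, with `r(T₀ ∪ T₁) = 3`,
`r(Tᵢ ∪ Lⱼ) = 3` for all `i, j`, and `r(L₀ ∪ L₁) = 4`. -/
def VamosQuad (M : Matroid α) (T₀ T₁ L₀ L₁ : Set α) : Prop :=
  M.IsFlat T₀ ∧ M.IsFlat T₁ ∧ M.IsFlat L₀ ∧ M.IsFlat L₁ ∧
  rk M T₀ = 2 ∧ rk M T₁ = 2 ∧ rk M L₀ = 2 ∧ rk M L₁ = 2 ∧
  Disjoint T₀ T₁ ∧ Disjoint T₀ L₀ ∧ Disjoint T₀ L₁ ∧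
  Disjoint T₁ L₀ ∧ Disjoint T₁ L₁ ∧ Disjoint L₀ L₁ ∧
  rk M (T₀ ∪ T₁ ∪ L₀) = 4 ∧ rk M (T₀ ∪ T₁ ∪ L₁) = 4 ∧
  rk M (T₀ ∪ L₀ ∪ L₁) = 4 ∧ rk M (T₁ ∪ L₀ ∪ L₁) = 4 ∧
  rk M (T₀ ∪ T₁) = 3 ∧
  rk M (T₀ ∪ L₀) = 3 ∧ rk M (T₀ ∪ L₁) = 3 ∧
  rk M (T₁ ∪ L₀) = 3 ∧ rk M (T₁ ∪ L₁) = 3 ∧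
  rk M (L₀ ∪ L₁) = 4

/-- The modular defect of a matroid: the sum of the modular defects of all
unordered pairs of flats (the sum over ordered pairs is twice this). -/
noncomputable def matroidDefect (M : Matroid α) : ℕ :=
  (∑ᶠ F ∈ {F | M.IsFlat F}, ∑ᶠ L ∈ {L | M.IsFlat L}, pairDefect M F L) / 2

/-! Write `a, b, u, i` for the ranks of `F, L, F ∪ L, F ∩ L`. A non-modular pair has `L ⊄ F`, so
`u ≥ a + 1` because `F` is a flat; together with `u ≤ 4` and `u + i < a + b` this forces
`i + 2 ≤ b ≤ a ≤ 3`. Hypermodularity excludes `a = b = 3`, and in a loopless matroid `i = 0` means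
`F ∩ L = ∅`. The converse is arithmetic. -/

section Rank

variable {M : Matroid α} {X Y F : Set α} {x : α}

-- `rk` is an `sSup` in `ℕ`, hence a junk `0` when ranks are unbounded; in finite rank it is `eRk`.
lemma cast_rk (M : Matroid α) [M.RankFinite] (X : Set α) : (rk M X : ℕ∞) = M.eRk X := by
  obtain ⟨I, hI⟩ := M.exists_isBasis' X
  have hIfin : I.Finite := hI.indep.finite
  have hle : ∀ n ∈ {n | ∃ J, M.Indep J ∧ J ⊆ X ∧ J.ncard = n}, n ≤ I.ncard := by
    rintro _ ⟨J, hJ, hJX, rfl⟩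
    have hJI : J.encard ≤ I.encard := hI.encard_eq_eRk ▸ hJ.encard_le_eRk_of_subset hJX
    rw [← hJ.finite.cast_ncard_eq, ← hIfin.cast_ncard_eq] at hJI
    exact_mod_cast hJI
  have hrk : rk M X = I.ncard :=
    le_antisymm (csSup_le ⟨_, I, hI.indep, hI.subset, rfl⟩ hle)
      (le_csSup ⟨_, hle⟩ ⟨I, hI.indep, hI.subset, rfl⟩)
  rw [hrk, hIfin.cast_ncard_eq, hI.encard_eq_eRk]

variable [M.RankFinite]

lemma rk_mono (hXY : X ⊆ Y) : rk M X ≤ rk M Y := by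
  rw [← Nat.cast_le (α := ℕ∞), cast_rk, cast_rk]
  exact M.eRk_mono hXY

lemma rk_le_rkM (X : Set α) : rk M X ≤ rkM M := by
  rw [rkM, ← Nat.cast_le (α := ℕ∞), cast_rk, cast_rk, eRk_ground]
  exact M.eRk_le_eRank X

lemma rk_inter_add_rk_union_le (X Y : Set α) :
    rk M (X ∩ Y) + rk M (X ∪ Y) ≤ rk M X + rk M Y := by
  rw [← Nat.cast_le (α := ℕ∞)]
  push_cast
  simp only [cast_rk]
  exact M.eRk_inter_add_eRk_union_le X Y

lemma rk_insert_eq_add_one (hx : x ∈ M.E \ M.closure X) : rk M (insert x X) = rk M X + 1 := by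
  rw [← Nat.cast_inj (R := ℕ∞)]
  push_cast
  simp only [cast_rk]
  exact M.eRk_insert_eq_add_one hx

lemma rk_eq_zero_iff [M.Loopless] (hX : X ⊆ M.E) : rk M X = 0 ↔ X = ∅ := by
  rw [← Nat.cast_inj (R := ℕ∞), cast_rk, Nat.cast_zero, eRk_eq_zero_iff hX, loops_eq_empty,
    subset_empty_iff]

lemma rk_lt_rk_union_of_isFlat (hF : M.IsFlat F) (hY : Y ⊆ M.E) (hYF : ¬ Y ⊆ F) :
    rk M F < rk M (F ∪ Y) := by
  obtain ⟨x, hxY, hxF⟩ := not_subset.mp hYF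
  calc rk M F < rk M (insert x F) := by
        rw [rk_insert_eq_add_one ⟨hY hxY, by rwa [hF.closure]⟩]
        exact Nat.lt_succ_self _
    _ ≤ rk M (F ∪ Y) := rk_mono (insert_subset (Or.inr hxY) subset_union_left)

lemma modularPair_iff : ModularPair M X Y ↔ rk M (X ∩ Y) + rk M (X ∪ Y) = rk M X + rk M Y := by
  have := rk_inter_add_rk_union_le (M := M) X Y
  unfold ModularPair pairDefect
  omega

end Rank

/-- Let M be a finite loopless rank-4 hypermodular matroid and
F, L flats with r(F) ≥ r(L). Then {F, L} is non-modular iff F ∩ L = ∅ and either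
(r(F) = 3 and r(L) = 2) or (r(F) = r(L) = 2 and r(F ∪ L) = 3). -/
theorem statement_14 {α : Type*} (M : Matroid α) (hfin : M.E.Finite)
    (hrk : rkM M = 4) (hloopless : M.closure ∅ = ∅) (hhm : Hypermodular M)
    (F L : Set α) (hF : M.IsFlat F) (hL : M.IsFlat L) (hge : rk M L ≤ rk M F) :
    ¬ ModularPair M F L ↔
      (F ∩ L = ∅ ∧ ((rk M F = 3 ∧ rk M L = 2) ∨
        (rk M F = 2 ∧ rk M L = 2 ∧ rk M (F ∪ L) = 3))) := by
  have : M.Finite := ⟨hfin⟩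
  have : M.Loopless := ⟨hloopless⟩
  have hsub := rk_inter_add_rk_union_le (M := M) F L
  have hunion : rk M (F ∪ L) ≤ 4 := hrk ▸ rk_le_rkM _
  have hplanes : rk M F = 3 → rk M L = 3 → ModularPair M F L := fun hF3 hL3 =>
    hhm F L hF hL (by omega) (by omega)
  rw [modularPair_iff] at hplanes ⊢
  rw [← rk_eq_zero_iff (inter_subset_left.trans hF.subset_ground)]
  constructor
  · intro hne
    have hLF : ¬ L ⊆ F := fun hLF => hne <| by
      rw [inter_eq_self_of_subset_right hLF, union_eq_self_of_subset_right hLF, add_comm]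
    have := rk_lt_rk_union_of_isFlat hF hL.subset_ground hLF
    omega
  · rintro ⟨hempty, ⟨hF3, hL2⟩ | ⟨hF2, hL2, hFL3⟩⟩ <;> omega

end SMC
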